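/- Let N ≥ 1, let u, v : ℝ^N → [0,∞) be measurable, let H ⊂ ℝ^N be a closed halfspace, and let φ : ℝ → [0,∞) be convex with φ(0) = 0. Then ∫_{ℝ^N} φ(u^H − v^H) ≤ ∫_{ℝ^N} φ(u − v). In particular, for every 1 ≤ p < ∞ and u, v ∈ L^p(ℝ^N) nonnegative, ‖u^H − v^H‖_{L^p} ≤ ‖u − v‖_{L^p}. -/

import Mathlib

/-!
Pointwise, polarization only rearranges each pair `{u x, u (σ x)}`: the larger value goes to the
point of `H`, and `v` is treated the same way. The pair of differences
`(max s s' - max t t', min s s' - min t t')` has the same sum as `(s - t, s' - t')` and lies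
inside its range, so by convexity `φ` of the first pair sums to at most `φ` of the second.
Integrating and using that the reflection `σ` preserves Lebesgue measure gives the inequality;
the `L^p` case is `φ = |·|^p`.
-/

open MeasureTheory Filter

/-- Reflection across the boundary hyperplane `{x : ⟪a,x⟫ = b}` of the closed
halfspace `H = {x : ⟪a,x⟫ ≤ b}` (for `‖a‖ = 1`). -/
noncomputable def reflectH {N : ℕ} (a : EuclideanSpace ℝ (Fin N)) (b : ℝ)
    (x : EuclideanSpace ℝ (Fin N)) : EuclideanSpace ℝ (Fin N) :=
  x - (2 * ((inner ℝ a x : ℝ) - b)) • a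

/-- Polarization (two-point rearrangement) of `u` with respect to the closed halfspace
`H = {x : ⟪a,x⟫ ≤ b}` (for `‖a‖ = 1`). -/
noncomputable def polarization {N : ℕ} (a : EuclideanSpace ℝ (Fin N)) (b : ℝ)
    (u : EuclideanSpace ℝ (Fin N) → ℝ) (x : EuclideanSpace ℝ (Fin N)) : ℝ :=
  if (inner ℝ a x : ℝ) ≤ b then max (u x) (u (reflectH a b x))
  else min (u x) (u (reflectH a b x))

open Set Function

theorem ConvexOn.map_add_map_le_of_mem_segment {E : Type*} [AddCommGroup E] [Module ℝ E]
    {s : Set E} {f : E → ℝ} (hf : ConvexOn ℝ s f) {x y x' y' : E} (hx' : x' ∈ s) (hy' : y' ∈ s)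
    (hx : x ∈ segment ℝ x' y') (hxy : x + y = x' + y') : f x + f y ≤ f x' + f y' := by
  obtain ⟨α, β, hα, hβ, hαβ, rfl⟩ := hx
  have hy : y = β • x' + α • y' := by
    linear_combination (norm := module) hxy - hαβ • (x' + y')
  have hfx := hf.2 hx' hy' hα hβ hαβ
  have hfy := hf.2 hx' hy' hβ hα (by rw [add_comm, hαβ])
  rw [hy]
  simp only [smul_eq_mul] at hfx hfy
  linear_combination hfx + hfy + (f x' + f y') * hαβ

theorem max_sub_max_mem_uIcc (s s' t t' : ℝ) : max s s' - max t t' ∈ uIcc (s - t) (s' - t') := by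
  grind [mem_uIcc]

theorem ConvexOn.map_sub_max_add_map_sub_min_le {φ : ℝ → ℝ} (hφ : ConvexOn ℝ univ φ)
    (s s' t t' : ℝ) :
    φ (max s s' - max t t') + φ (min s s' - min t t') ≤ φ (s - t) + φ (s' - t') := by
  refine hφ.map_add_map_le_of_mem_segment (mem_univ _) (mem_univ _) ?_ ?_
  · rw [segment_eq_uIcc]
    exact max_sub_max_mem_uIcc s s' t t'
  · linarith [min_add_max s s', min_add_max t t']

theorem MeasureTheory.lintegral_le_lintegral_of_add_comp_le {α : Type*} [MeasurableSpace α]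
    {μ : Measure α} {σ : α → α} (hσ : MeasurePreserving σ μ μ) (hσ_inv : Involutive σ)
    {f g : α → ENNReal} (hg : AEMeasurable g μ) (hfg : ∀ x, f x + f (σ x) ≤ g x + g (σ x)) :
    ∫⁻ x, f x ∂μ ≤ ∫⁻ x, g x ∂μ := by
  have hσ_emb := (MeasurableEquiv.ofInvolutive σ hσ_inv hσ.measurable).measurableEmbedding
  have hf_comp := hσ.lintegral_comp_emb hσ_emb f
  have hg_comp := hσ.lintegral_comp_emb hσ_emb g
  have h2 : 2 * ∫⁻ x, f x ∂μ ≤ 2 * ∫⁻ x, g x ∂μ :=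
    calc 2 * ∫⁻ x, f x ∂μ = (∫⁻ x, f x ∂μ) + ∫⁻ x, f (σ x) ∂μ := by rw [hf_comp, two_mul]
      _ ≤ ∫⁻ x, f x + f (σ x) ∂μ := le_lintegral_add _ _
      _ ≤ ∫⁻ x, g x + g (σ x) ∂μ := lintegral_mono hfg
      _ = (∫⁻ x, g x ∂μ) + ∫⁻ x, g (σ x) ∂μ := lintegral_add_left' hg _
      _ = 2 * ∫⁻ x, g x ∂μ := by rw [hg_comp, two_mul]
  exact (ENNReal.mul_le_mul_iff_right two_ne_zero ENNReal.ofNat_ne_top).mp h2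

section Polarization

variable {N : ℕ} {a : EuclideanSpace ℝ (Fin N)} {b : ℝ}

theorem inner_reflectH (ha : ‖a‖ = 1) (x : EuclideanSpace ℝ (Fin N)) :
    inner ℝ a (reflectH a b x) = 2 * b - inner ℝ a x := by
  rw [reflectH, inner_sub_right, real_inner_smul_right, real_inner_self_eq_norm_sq, ha]
  ring

theorem reflectH_of_inner_eq {x : EuclideanSpace ℝ (Fin N)} (hx : inner ℝ a x = b) :
    reflectH a b x = x := by
  simp [reflectH, hx]

theorem reflectH_involutive (ha : ‖a‖ = 1) : Involutive (reflectH a b) := by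
  intro x
  have h := inner_reflectH (b := b) ha x
  simp only [reflectH] at h ⊢
  rw [h]
  module

theorem reflectH_eq_reflection_add (ha : ‖a‖ = 1) (x : EuclideanSpace ℝ (Fin N)) :
    reflectH a b x = (Submodule.span ℝ {a})ᗮ.reflection x + (2 * b) • a := by
  rw [Submodule.reflection_orthogonal_apply, Submodule.reflection_apply,
    Submodule.starProjection_singleton, ha]
  simp only [reflectH]
  module

theorem measurePreserving_reflectH (ha : ‖a‖ = 1) :
    MeasurePreserving (reflectH a b) (volume : Measure (EuclideanSpace ℝ (Fin N))) volume := by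
  have : reflectH a b = (· + (2 * b) • a) ∘ (Submodule.span ℝ {a})ᗮ.reflection :=
    funext (reflectH_eq_reflection_add ha)
  rw [this]
  exact (measurePreserving_add_right volume _).comp (LinearIsometryEquiv.measurePreserving _)

theorem polarization_of_inner_le (u : EuclideanSpace ℝ (Fin N) → ℝ)
    {x : EuclideanSpace ℝ (Fin N)} (hx : inner ℝ a x ≤ b) :
    polarization a b u x = max (u x) (u (reflectH a b x)) :=
  if_pos hx

theorem polarization_reflectH_of_inner_le (ha : ‖a‖ = 1) (u : EuclideanSpace ℝ (Fin N) → ℝ)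
    {x : EuclideanSpace ℝ (Fin N)} (hx : inner ℝ a x ≤ b) :
    polarization a b u (reflectH a b x) = min (u x) (u (reflectH a b x)) := by
  by_cases hσx : inner ℝ a (reflectH a b x) ≤ b
  · rw [inner_reflectH ha] at hσx
    have hσx_eq : reflectH a b x = x := reflectH_of_inner_eq (by linarith)
    rw [hσx_eq, polarization_of_inner_le u hx, hσx_eq, max_self, min_self]
  · rw [polarization, if_neg hσx, reflectH_involutive ha, min_comm]

theorem ConvexOn.map_polarization_sub_add_le {φ : ℝ → ℝ} (hφ : ConvexOn ℝ univ φ)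
    (ha : ‖a‖ = 1) (u v : EuclideanSpace ℝ (Fin N) → ℝ) (x : EuclideanSpace ℝ (Fin N)) :
    φ (polarization a b u x - polarization a b v x) +
        φ (polarization a b u (reflectH a b x) - polarization a b v (reflectH a b x)) ≤
      φ (u x - v x) + φ (u (reflectH a b x) - v (reflectH a b x)) := by
  wlog hx : inner ℝ a x ≤ b generalizing x
  · have h := this (reflectH a b x) (by rw [inner_reflectH ha]; linarith)
    rw [reflectH_involutive ha] at h
    linarith
  rw [polarization_of_inner_le u hx, polarization_of_inner_le v hx,
    polarization_reflectH_of_inner_le ha u hx, polarization_reflectH_of_inner_le ha v hx]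
  exact hφ.map_sub_max_add_map_sub_min_le _ _ _ _

theorem ConvexOn.lintegral_polarization_sub_le {φ : ℝ → ℝ} (hφ : ConvexOn ℝ univ φ)
    (hφ_nonneg : ∀ t, 0 ≤ φ t) (ha : ‖a‖ = 1) {u v : EuclideanSpace ℝ (Fin N) → ℝ}
    (hu : Measurable u) (hv : Measurable v) :
    ∫⁻ x, ENNReal.ofReal (φ (polarization a b u x - polarization a b v x)) ≤
      ∫⁻ x, ENNReal.ofReal (φ (u x - v x)) := by
  refine lintegral_le_lintegral_of_add_comp_le (measurePreserving_reflectH (b := b) ha)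
    (reflectH_involutive ha)
    (ENNReal.measurable_ofReal.comp (hφ.locallyLipschitz.continuous.measurable.comp
      (hu.sub hv))).aemeasurable fun x => ?_
  rw [← ENNReal.ofReal_add (hφ_nonneg _) (hφ_nonneg _),
    ← ENNReal.ofReal_add (hφ_nonneg _) (hφ_nonneg _)]
  exact ENNReal.ofReal_le_ofReal (hφ.map_polarization_sub_add_le ha u v x)

end Polarization

theorem convexOn_univ_norm_rpow {E : Type*} [SeminormedAddCommGroup E] [NormedSpace ℝ E]
    {p : ℝ} (hp : 1 ≤ p) : ConvexOn ℝ univ fun x : E => ‖x‖ ^ p := by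
  refine ⟨convex_univ, fun x _ y _ α β hα hβ hαβ => ?_⟩
  calc ‖α • x + β • y‖ ^ p ≤ (α * ‖x‖ + β * ‖y‖) ^ p := by
        gcongr
        refine (norm_add_le _ _).trans_eq ?_
        rw [norm_smul_of_nonneg hα, norm_smul_of_nonneg hβ]
    _ ≤ α • ‖x‖ ^ p + β • ‖y‖ ^ p :=
        (convexOn_rpow hp).2 (norm_nonneg x) (norm_nonneg y) hα hβ hαβ

theorem statement13_general {N : ℕ}
    (u v : EuclideanSpace ℝ (Fin N) → ℝ) (hum : Measurable u) (hvm : Measurable v)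
    (a : EuclideanSpace ℝ (Fin N)) (b : ℝ) (ha : ‖a‖ = 1)
    (φ : ℝ → ℝ) (hφ : ConvexOn ℝ Set.univ φ) (hφ0 : ∀ t, 0 ≤ φ t) :
    (∫⁻ x, ENNReal.ofReal (φ (polarization a b u x - polarization a b v x)) ≤
        ∫⁻ x, ENNReal.ofReal (φ (u x - v x))) ∧
      ∀ p : ℝ, 1 ≤ p → MemLp u (ENNReal.ofReal p) volume →
        MemLp v (ENNReal.ofReal p) volume →
          eLpNorm (fun x => polarization a b u x - polarization a b v x)
              (ENNReal.ofReal p) volume ≤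
            eLpNorm (fun x => u x - v x) (ENNReal.ofReal p) volume := by
  refine ⟨hφ.lintegral_polarization_sub_le hφ0 ha hum hvm, fun p hp _ _ => ?_⟩
  have hp_pos : 0 < p := zero_lt_one.trans_le hp
  have hp_ne_zero : ENNReal.ofReal p ≠ 0 := ENNReal.ofReal_ne_zero_iff.mpr hp_pos
  rw [eLpNorm_eq_lintegral_rpow_enorm_toReal hp_ne_zero ENNReal.ofReal_ne_top,
    eLpNorm_eq_lintegral_rpow_enorm_toReal hp_ne_zero ENNReal.ofReal_ne_top,
    ENNReal.toReal_ofReal hp_pos.le]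
  gcongr ?_ ^ _
  simpa only [← ofReal_norm, ENNReal.ofReal_rpow_of_nonneg (norm_nonneg _) hp_pos.le]
    using (convexOn_univ_norm_rpow hp).lintegral_polarization_sub_le
      (fun t => Real.rpow_nonneg (norm_nonneg t) p) ha hum hvm

/-- For measurable nonnegative `u, v : ℝ^N → [0,∞)`, a closed halfspace
`H = {x : ⟪a,x⟫ ≤ b}` and a convex `φ : ℝ → [0,∞)` with `φ(0) = 0`, one has
`∫ φ(u^H − v^H) ≤ ∫ φ(u − v)`; in particular for `1 ≤ p < ∞` and `u, v ∈ L^p` nonnegative,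
`‖u^H − v^H‖_{L^p} ≤ ‖u − v‖_{L^p}`. -/
theorem statement13 {N : ℕ} (hN : 1 ≤ N)
    (u v : EuclideanSpace ℝ (Fin N) → ℝ) (hum : Measurable u) (hvm : Measurable v)
    (hu0 : ∀ x, 0 ≤ u x) (hv0 : ∀ x, 0 ≤ v x)
    (a : EuclideanSpace ℝ (Fin N)) (b : ℝ) (ha : ‖a‖ = 1)
    (φ : ℝ → ℝ) (hφ : ConvexOn ℝ Set.univ φ) (hφ0 : ∀ t, 0 ≤ φ t) (hφz : φ 0 = 0) :
    (∫⁻ x, ENNReal.ofReal (φ (polarization a b u x - polarization a b v x)) ≤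
        ∫⁻ x, ENNReal.ofReal (φ (u x - v x))) ∧
      ∀ p : ℝ, 1 ≤ p → MemLp u (ENNReal.ofReal p) volume →
        MemLp v (ENNReal.ofReal p) volume →
          eLpNorm (fun x => polarization a b u x - polarization a b v x)
              (ENNReal.ofReal p) volume ≤
            eLpNorm (fun x => u x - v x) (ENNReal.ofReal p) volume :=
  statement13_general u v hum hvm a b ha φ hφ hφ0
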